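/- arXiv:2501.03776 — 2 statements merged into one kernel-verified Lean document; each statement's English description precedes it below -/
import Mathlib

section
/- Let {w_k} ⊂ (0,1) be a nondecreasing sequence with γ := sup_k w_k < 1, and let sequences {X^k}, {X̄^k} in a Euclidean space satisfy X̄^{k+1} = X^{k+1} + w_k(X^{k+1} − X̄^k) for all k, with Σ_k ‖X^{k+1} − X^k‖² < ∞. Then Σ_k ‖X̄^k − X^k‖² < ∞; in particular ‖X̄^k − X^k‖ → 0. -/
open Filter
noncomputable section

theorem stmt7 {E : Type*} [NormedAddCommGroup E] [InnerProductSpace ℝ E]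
    [FiniteDimensional ℝ E]
    (w : ℕ → ℝ) (hw : ∀ k, 0 < w k ∧ w k < 1) (hmono : Monotone w)
    (γ : ℝ) (hγ : γ = ⨆ k, w k) (hγ1 : γ < 1)
    (X Xb : ℕ → E)
    (hrec : ∀ k : ℕ, Xb (k+1) = X (k+1) + w k • (X (k+1) - Xb k))
    (hsum : Summable fun k => ‖X (k+1) - X k‖^2) :
    Summable (fun k => ‖Xb k - X k‖^2) ∧
      Tendsto (fun k => ‖Xb k - X k‖) atTop (nhds 0) := by
  have hbdd : BddAbove (Set.range w) := ⟨1, by rintro _ ⟨k, rfl⟩; exact (hw k).2.le⟩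
  have hwγ : ∀ k, w k ≤ γ := fun k => hγ ▸ le_ciSup hbdd k
  have hγ0 : 0 < γ := lt_of_lt_of_le (hw 0).1 (hwγ 0)
  set a : ℕ → ℝ := fun k => ‖X (k+1) - X k‖ with ha
  set b : ℕ → ℝ := fun k => ‖Xb k - X k‖ with hbdef
  have ha0 : ∀ k, 0 ≤ a k := fun k => norm_nonneg _
  have hb0 : ∀ k, 0 ≤ b k := fun k => norm_nonneg _
  have hbrec : ∀ k, b (k+1) ≤ γ * (a k + b k) := by
    intro k
    have h1 : Xb (k+1) - X (k+1) = w k • (X (k+1) - Xb k) := by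
      rw [hrec k]; abel
    have h2 : b (k+1) = w k * ‖X (k+1) - Xb k‖ := by
      show ‖Xb (k+1) - X (k+1)‖ = _
      rw [h1, norm_smul, Real.norm_eq_abs, abs_of_pos (hw k).1]
    have h3 : ‖X (k+1) - Xb k‖ ≤ a k + b k := by
      have he : X (k+1) - Xb k = (X (k+1) - X k) + (X k - Xb k) := by abel
      calc ‖X (k+1) - Xb k‖ = ‖(X (k+1) - X k) + (X k - Xb k)‖ := by rw [he]
        _ ≤ ‖X (k+1) - X k‖ + ‖X k - Xb k‖ := norm_add_le _ _
        _ = a k + b k := by rw [norm_sub_rev (X k) (Xb k)]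
    rw [h2]
    calc w k * ‖X (k+1) - Xb k‖ ≤ γ * ‖X (k+1) - Xb k‖ :=
          mul_le_mul_of_nonneg_right (hwγ k) (norm_nonneg _)
      _ ≤ γ * (a k + b k) := mul_le_mul_of_nonneg_left h3 hγ0.le
  set δ : ℝ := (1 - γ^2)/2 with hδdef
  have hδ : 0 < δ := by
    have : γ^2 < 1 := by nlinarith
    rw [hδdef]; linarith
  set ρ : ℝ := γ^2 + δ with hρdef
  have hρ0 : 0 ≤ ρ := by positivity
  have hρ1 : ρ < 1 := by rw [hρdef, hδdef]; nlinarith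
  set C : ℝ := (δ*γ^2 + γ^4)/δ with hCdef
  have hC0 : 0 ≤ C := by positivity
  have hCδ : δ * C = δ*γ^2 + γ^4 := by
    rw [hCdef]; field_simp
  have hd : ∀ k, b (k+1)^2 ≤ ρ * b k^2 + C * a k^2 := by
    intro k
    have h4 : b (k+1)^2 ≤ (γ * (a k + b k))^2 :=
      pow_le_pow_left₀ (hb0 _) (hbrec k) 2
    have h5 : δ * (γ * (a k + b k))^2 ≤ δ * ρ * b k^2 + (δ*γ^2 + γ^4) * a k^2 := by
      rw [hρdef]; nlinarith [sq_nonneg (δ * b k - γ^2 * a k)]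
    have h6 : δ * b (k+1)^2 ≤ δ * (ρ * b k^2 + C * a k^2) := by
      have := mul_le_mul_of_nonneg_left h4 hδ.le
      calc δ * b (k+1)^2 ≤ δ * (γ * (a k + b k))^2 := this
        _ ≤ δ * ρ * b k^2 + (δ*γ^2 + γ^4) * a k^2 := h5
        _ = δ * (ρ * b k^2 + C * a k^2) := by linear_combination (-(δ * b k ^ 2)) * hρdef - a k ^ 2 * hCδ
    exact le_of_mul_le_mul_left h6 hδ
  set S : ℝ := ∑' k, a k^2 with hSdef
  have hS : ∀ n, ∑ i ∈ Finset.range n, a i^2 ≤ S :=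
    fun n => Summable.sum_le_tsum (Finset.range n) (fun i _ => sq_nonneg _) hsum
  have hbound : ∀ n, (1-ρ) * (∑ i ∈ Finset.range n, b i^2) ≤ b 0^2 + C * S := by
    intro n
    have hS0 : 0 ≤ S := tsum_nonneg fun k => sq_nonneg _
    have hCS : 0 ≤ C * S := mul_nonneg hC0 hS0
    cases n with
    | zero =>
      simp only [Finset.range_zero, Finset.sum_empty, mul_zero]
      nlinarith [sq_nonneg (b 0)]
    | succ m =>
      have h1 : ∑ i ∈ Finset.range (m+1), b i^2
          = (∑ i ∈ Finset.range m, b (i+1)^2) + b 0^2 := by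
        exact Finset.sum_range_succ' _ m
      have h2 : ∑ i ∈ Finset.range m, b (i+1)^2
          ≤ ρ * (∑ i ∈ Finset.range m, b i^2) + C * (∑ i ∈ Finset.range m, a i^2) := by
        rw [Finset.mul_sum, Finset.mul_sum, ← Finset.sum_add_distrib]
        exact Finset.sum_le_sum (fun i _ => hd i)
      have h3 : ∑ i ∈ Finset.range m, b i^2 ≤ ∑ i ∈ Finset.range (m+1), b i^2 :=
        Finset.sum_le_sum_of_subset_of_nonneg (by simp) (fun i _ _ => sq_nonneg _)
      have h4 : ρ * (∑ i ∈ Finset.range m, b i^2) ≤ ρ * (∑ i ∈ Finset.range (m+1), b i^2) :=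
        mul_le_mul_of_nonneg_left h3 hρ0
      have h5 : C * (∑ i ∈ Finset.range m, a i^2) ≤ C * S :=
        mul_le_mul_of_nonneg_left (hS m) hC0
      nlinarith [h1, h2, h4, h5]
  have hsummable : Summable (fun k => b k^2) := by
    apply summable_of_sum_range_le (fun n => sq_nonneg _)
      (c := (b 0^2 + C * S)/(1-ρ))
    intro n
    rw [le_div_iff₀ (by linarith : (0:ℝ) < 1-ρ)]
    have := hbound n
    nlinarith [hbound n]
  refine ⟨hsummable, ?_⟩
  have h1 : Tendsto (fun k => b k^2) atTop (nhds 0) := hsummable.tendsto_atTop_zero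
  have h2 : Tendsto (fun k => Real.sqrt (b k^2)) atTop (nhds (Real.sqrt 0)) :=
    (Real.continuous_sqrt.tendsto 0).comp h1
  have h3 : (fun k => Real.sqrt (b k^2)) = fun k => b k := by
    funext k; exact Real.sqrt_sq (hb0 k)
  rw [h3, Real.sqrt_zero] at h2
  exact h2
end
end

section
/- Let {w_k} ⊂ (0,1) be nondecreasing with limit γ < 1 and let a_k, b_k ≥ 0 satisfy a_k² ≥ (1/w_k² − 1/w_k) b_{k+1}² + (1 − 1/w_k) b_k² for all k ≥ 0 (arising from the extrapolation identity). If Σ_k a_k² < ∞ then Σ_k b_k² < ∞. -/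
open Filter
noncomputable section

theorem stmt8 (w : ℕ → ℝ) (hw : ∀ k, 0 < w k ∧ w k < 1) (hmono : Monotone w)
    (γ : ℝ) (hγ : Tendsto w atTop (nhds γ)) (hγ1 : γ < 1)
    (a b : ℕ → ℝ) (ha : ∀ k, 0 ≤ a k) (hb : ∀ k, 0 ≤ b k)
    (hineq : ∀ k : ℕ,
      (1 / (w k)^2 - 1 / w k) * (b (k+1))^2 + (1 - 1 / w k) * (b k)^2 ≤ (a k)^2)
    (hsuma : Summable fun k => (a k)^2) :
    Summable fun k => (b k)^2 := by
  have hwle : ∀ k, w k ≤ γ := fun k => hmono.ge_of_tendsto hγ k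
  have hγ0 : 0 < γ := lt_of_lt_of_le (hw 0).1 (hwle 0)
  have hγinv : 1 < 1/γ := by rw [lt_div_iff₀ hγ0]; linarith
  set ε := (1/γ - 1)^2 with hε
  have hεpos : 0 < ε := pow_pos (by linarith) 2
  -- basic facts about 1 / w k
  have hwinv : ∀ k, 1 < 1 / w k := fun k => by
    rw [lt_div_iff₀ (hw k).1]; linarith [(hw k).2]
  have hginv : ∀ k, 1/γ ≤ 1 / w k := fun k =>
    one_div_le_one_div_of_le (hw k).1 (hwle k)
  have hcoeff0 : ∀ k, (0:ℝ) ≤ 1 / (w k)^2 - 1 / w k := by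
    intro k
    have h := hwinv k
    have : 1 / (w k)^2 = (1 / w k)^2 := by rw [one_div_pow]
    nlinarith
  -- key induction
  have key : ∀ N, (1/(w N)^2 - 1/w N) * (b (N+1))^2
      + ε * ∑ k ∈ Finset.range N, (b (k+1))^2
      ≤ (∑ k ∈ Finset.range (N+1), (a k)^2) + (1/w 0 - 1) * (b 0)^2 := by
    intro N
    induction N with
    | zero =>
        simp only [Finset.range_zero, Finset.sum_empty, Finset.range_one,
          Finset.sum_singleton, mul_zero, add_zero, Nat.zero_add, Finset.sum_range_one]
        have := hineq 0
        linarith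
    | succ N ih =>
        have h1 := hineq (N+1)
        have hco : ε ≤ 1/(w N)^2 - 1/w N - (1/(w (N+1)) - 1) := by
          have hxy : 1 / w (N+1) ≤ 1 / w N :=
            one_div_le_one_div_of_le (hw N).1 (hmono (Nat.le_succ N))
          have hg : 1/γ ≤ 1 / w (N+1) := hginv (N+1)
          have hy : 1 < 1 / w (N+1) := hwinv (N+1)
          have hsq : 1 / (w N)^2 = (1 / w N)^2 := by rw [one_div_pow]
          rw [hε, hsq]
          nlinarith [sq_nonneg (1/w (N+1) - 1), sq_nonneg (1/w N - 1/w (N+1)),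
            mul_nonneg (sub_nonneg.2 hxy) (by linarith : (0:ℝ) ≤ 1/w N + 1/w (N+1) - 1)]
        have hbN : 0 ≤ (b (N+1))^2 := sq_nonneg _
        rw [Finset.sum_range_succ, Finset.sum_range_succ (fun k => (a k)^2) (N+1)]
        nlinarith [ih]
  -- bound on partial sums
  have hbound : ∀ N, ∑ k ∈ Finset.range N, (b (k+1))^2
      ≤ ((∑' k, (a k)^2) + (1/w 0 - 1) * (b 0)^2) / ε := by
    intro N
    rw [le_div_iff₀ hεpos]
    have h1 := key N
    have h2 : (∑ k ∈ Finset.range (N+1), (a k)^2) ≤ ∑' k, (a k)^2 :=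
      Summable.sum_le_tsum _ (fun i _ => sq_nonneg _) hsuma
    have h3 : 0 ≤ (1/(w N)^2 - 1/w N) * (b (N+1))^2 :=
      mul_nonneg (hcoeff0 N) (sq_nonneg _)
    nlinarith
  have hs1 : Summable fun k => (b (k+1))^2 :=
    summable_of_sum_range_le (fun n => sq_nonneg _) hbound
  exact (summable_nat_add_iff 1).mp hs1
end
end
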